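/- Let X be a real Banach space and let 𝒞 be a compatible class of bounded subsets of X. Suppose that for every ε > 0, every M ≥ 2 and every 0 < η < ε, there exists K > 0 such that for every closed convex C ∈ 𝒞 with diam(C) ≤ M and dist(0, C) ≥ ε, there exist z₀ ∈ X and 0 < r ≤ K such that C ⊆ B[z₀, r] and dist(0, B[z₀, r]) > η. Then for every ε > 0 there exists δ > 0 such that for every C ∈ 𝒞 with C ⊆ B(X) and every f ∈ S(X*) there is x ∈ S(X) with S(B(X*), x, δ) ⊆ B_C(f, ε). -/

import Mathlib

open Metric Set Pointwise

variable {X : Type*} [NormedAddCommGroup X] [NormedSpace ℝ X]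

/-- The seminorm `‖f‖_A = sup {|f x| : x ∈ A}` on the dual, for a bounded set `A ⊆ X`. -/
noncomputable def semiNormOn (A : Set X) (f : StrongDual ℝ X) : ℝ :=
  sSup ((fun x => |f x|) '' A)

/-- `B_A(f, ε) = {g ∈ X* : ‖f − g‖_A < ε}`. -/
def ballOn (A : Set X) (f : StrongDual ℝ X) (ε : ℝ) : Set (StrongDual ℝ X) :=
  {g | semiNormOn A (f - g) < ε}

/-- `diam_A(B) = sup {‖f − g‖_A : f, g ∈ B}`. -/
noncomputable def diamOn (A : Set X) (B : Set (StrongDual ℝ X)) : ℝ :=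
  sSup ((fun p : StrongDual ℝ X × StrongDual ℝ X =>
    semiNormOn A (p.1 - p.2)) '' (B ×ˢ B))

/-- The w*-slice `S(B(X*), x, δ) = {f ∈ B(X*) : f x > 1 − δ}`. -/
def wslice (x : X) (δ : ℝ) : Set (StrongDual ℝ X) :=
  {f | ‖f‖ ≤ 1 ∧ 1 - δ < f x}

/-- `D(x) = {f ∈ S(X*) : f x = 1}`. -/
def dualD (x : X) : Set (StrongDual ℝ X) :=
  {f | ‖f‖ = 1 ∧ f x = 1}

/-- `D(E) = ⋃ {D(y) : y ∈ E}`. -/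
def dualDSet (E : Set X) : Set (StrongDual ℝ X) :=
  ⋃ y ∈ E, dualD y

/-- `d1(C, x, δ) = sup {(‖x + λ y‖ + ‖x − λ y‖ − 2)/λ : 0 < λ < δ, y ∈ C}`. -/
noncomputable def d1 (C : Set X) (x : X) (δ : ℝ) : ℝ :=
  sSup {t | ∃ l : ℝ, ∃ y ∈ C, 0 < l ∧ l < δ ∧ t = (‖x + l • y‖ + ‖x - l • y‖ - 2) / l}

/-- `d2(C, x, δ) = diam_C (S(B(X*), x, δ))`. -/
noncomputable def d2 (C : Set X) (x : X) (δ : ℝ) : ℝ :=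
  diamOn C (wslice x δ)

/-- `d3(C, x, δ) = diam_C (D(S(X) ∩ B(x, δ)))`. -/
noncomputable def d3 (C : Set X) (x : X) (δ : ℝ) : ℝ :=
  diamOn C (dualDSet ({y | ‖y‖ = 1} ∩ ball x δ))

/-- `M_{ε, δ, C}(X)`. -/
noncomputable def Mset (ε δ : ℝ) (C : Set X) : Set X :=
  {x | ‖x‖ = 1 ∧
    sSup {t | ∃ y ∈ C, 0 < ‖y‖ ∧ ‖y‖ < δ ∧ t = (‖x + y‖ + ‖x - y‖ - 2) / ‖y‖} < ε}

/-- `M_{ε, C}(X) = ⋃_{δ > 0} M_{ε, δ, C}(X)`. -/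
noncomputable def MsetAll (ε : ℝ) (C : Set X) : Set X :=
  ⋃ δ > 0, Mset ε δ C

/-- A compatible class of bounded subsets of `X`. -/
structure IsCompatibleClass (𝒞 : Set (Set X)) : Prop where
  bounded : ∀ C ∈ 𝒞, Bornology.IsBounded C
  smul_add_mem : ∀ C ∈ 𝒞, ∀ (a : ℝ) (x : X), (fun y => a • y + x) '' C ∈ 𝒞
  union_singleton_mem : ∀ C ∈ 𝒞, ∀ x : X, C ∪ {x} ∈ 𝒞
  closedAbsConvexHull_mem : ∀ C ∈ 𝒞, closure (absConvexHull ℝ C) ∈ 𝒞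
  subset_mem : ∀ C ∈ 𝒞, ∀ A ⊆ C, A ∈ 𝒞
  union_mem : ∀ C₁ ∈ 𝒞, ∀ C₂ ∈ 𝒞, C₁ ∪ C₂ ∈ 𝒞

/-- `f ∈ S(X*)` is a strong `𝒞`-semidenting point of `B(X*)`. -/
def IsStrongSemidenting (𝒞 : Set (Set X)) (f : StrongDual ℝ X) : Prop :=
  ∀ A ∈ 𝒞, ∀ ε : ℝ, 0 < ε → ∃ x : X, ‖x‖ = 1 ∧ ∃ δ : ℝ, 0 < δ ∧ δ < 1 ∧
    wslice x δ ⊆ ballOn A f ε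

/-- A set is the intersection of the closed balls containing it. -/
def IsBallIntersection (D : Set X) : Prop :=
  D = ⋂₀ {B : Set X | (∃ z : X, ∃ r : ℝ, 0 < r ∧ B = closedBall z r) ∧ D ⊆ B}

/-- `X` has the strong `𝒞`-MIP. -/
def HasStrongCMIP (𝒞 : Set (Set X)) : Prop :=
  ∀ C ∈ 𝒞, IsClosed C → Convex ℝ C → ∀ β : ℝ, 0 ≤ β →
    IsBallIntersection (closure (C + closedBall (0 : X) β))

/-- A support mapping: a selection of the duality map `D`. -/
def IsSupportMapping (φ : X → StrongDual ℝ X) : Prop :=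
  ∀ x : X, ‖x‖ = 1 → φ x ∈ dualD x

/-- The duality map on `X` is norm-`τ` quasicontinuous. -/
def DualityMapQuasicontinuous (𝒞 : Set (Set X)) : Prop :=
  ∀ f : StrongDual ℝ X, ‖f‖ = 1 → ∀ ε : ℝ, 0 < ε → ∀ C ∈ 𝒞,
    ∃ δ : ℝ, 0 < δ ∧ ∃ x : X, ‖x‖ = 1 ∧
      dualDSet ({y | ‖y‖ = 1} ∩ ball x δ) ⊆ ballOn C f ε

/-- `cone(A) = {λ a : λ ≥ 0, a ∈ A}`. -/
def coneOf (A : Set (StrongDual ℝ X)) : Set (StrongDual ℝ X) :=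
  {g | ∃ l : ℝ, 0 ≤ l ∧ ∃ a ∈ A, g = l • a}

/-- `X` has the `𝒞`-UMIP. -/
def HasCUMIP (𝒞 : Set (Set X)) : Prop :=
  ∀ ε : ℝ, 0 < ε → ∀ M : ℝ, 2 ≤ M → ∃ K : ℝ, 0 < K ∧ ∃ η : ℝ, 0 < η ∧ η ≤ ε ∧
    ∀ C ∈ 𝒞, IsClosed C → Convex ℝ C → Metric.diam C ≤ M → ε ≤ Metric.infDist 0 C →
      ∃ z₀ : X, ∃ r : ℝ, 0 < r ∧ r ≤ K ∧ C ⊆ closedBall z₀ r ∧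
        η ≤ Metric.infDist 0 (closedBall z₀ r)

/-!
Pick `u ∈ B(X)` with `f u > 1 - σ` and let `A` be the closed absolutely convex hull of `C ∪ {u}`.
The cap `D = u + {y ∈ A : f y ≥ -σ}` is a closed convex member of `𝒞` of diameter at most `2` and at
distance at least `1 - 2σ` from `0`, so the hypothesis puts it inside a ball `B[z₀, r]`, `r ≤ K`,
at distance more than `1 - 3σ` from `0`. Every `g` in the slice determined by `z₀ / ‖z₀‖` and
`σ / (1 + K)` then exceeds `1 - 4σ` on `D`; that is, on `A` the bound `f ≥ -σ` forces `g ≥ -4σ`.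
Applied to `±(y - f(y) u) / 2` for `y ∈ C`, on which `f` is small, this gives `|f y - g y| ≤ 12σ`.
-/

section LinearFunctional

variable {E F : Type*} [AddCommGroup E] [Module ℝ E] [FunLike F E ℝ] [LinearMapClass F ℝ E ℝ]
  {A : Set E} {f g : F}

theorem Balanced.abs_apply_le_of_forall_neg_le (hA : Balanced ℝ A) {a b : ℝ}
    (hfg : ∀ w ∈ A, -a ≤ f w → -b ≤ g w) {z : E} (hz : z ∈ A) (hfz : |f z| ≤ a) :
    |g z| ≤ b := by
  rw [abs_le] at hfz ⊢
  have hneg := hfg (-z) (hA.neg_mem_iff.2 hz) (by rw [map_neg]; linarith)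
  rw [map_neg] at hneg
  exact ⟨hfg z hz hfz.1, by linarith⟩

theorem AbsConvex.abs_sub_apply_le (hA : AbsConvex ℝ A) {u y : E} (hu : u ∈ A) (hy : y ∈ A)
    {σ τ b : ℝ} (hfu : |1 - f u| ≤ σ) (hgu : |1 - g u| ≤ τ) (hfy : |f y| ≤ 1)
    (hfg : ∀ w ∈ A, -σ ≤ f w → -b ≤ g w) : |f y - g y| ≤ τ + 2 * b := by
  set z : E := (2⁻¹ : ℝ) • y + (2⁻¹ : ℝ) • (-f y) • u
  have hz : z ∈ A := hA.2 hy (hA.1.smul_mem (by rwa [norm_neg, Real.norm_eq_abs]) hu)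
    (by norm_num) (by norm_num) (by norm_num)
  have hfz : f z = f y * (1 - f u) / 2 := by simp only [z, map_add, map_smul, smul_eq_mul]; ring
  have hgz : g z = (g y - f y * g u) / 2 := by simp only [z, map_add, map_smul, smul_eq_mul]; ring
  have hfz_le : |f z| ≤ σ := by
    rw [hfz, abs_div, abs_mul, abs_two]
    nlinarith [abs_nonneg (f y), abs_nonneg (1 - f u)]
  have hgz_le := hA.1.abs_apply_le_of_forall_neg_le hfg hz hfz_le
  calc |f y - g y| = |f y * (1 - g u) - 2 * g z| := by rw [hgz]; ring_nf
    _ ≤ |f y| * |1 - g u| + 2 * |g z| := by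
      refine (abs_sub _ _).trans ?_
      rw [abs_mul, abs_mul, abs_two]
    _ ≤ 1 * τ + 2 * b := by gcongr
    _ = τ + 2 * b := by ring

end LinearFunctional

theorem abs_apply_le_one {g : StrongDual ℝ X} (hg : ‖g‖ ≤ 1) {x : X} (hx : ‖x‖ ≤ 1) :
    |g x| ≤ 1 := by
  rw [← Real.norm_eq_abs]
  calc ‖g x‖ ≤ 1 * ‖x‖ := g.le_of_opNorm_le hg x
    _ ≤ 1 := by linarith

theorem exists_norm_le_one_lt_apply (f : StrongDual ℝ X) {c : ℝ} (hc : c < ‖f‖) :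
    ∃ u : X, ‖u‖ ≤ 1 ∧ c < f u := by
  obtain ⟨u, hu, hfu⟩ := f.exists_lt_apply_of_lt_opNorm hc
  rcases le_or_gt 0 (f u) with h | h
  · exact ⟨u, hu.le, by rwa [Real.norm_of_nonneg h] at hfu⟩
  · exact ⟨-u, by simpa using hu.le, by rwa [map_neg, ← Real.norm_of_nonpos h.le]⟩

theorem semiNormOn_le {A : Set X} {f : StrongDual ℝ X} {c : ℝ} (hc : 0 ≤ c)
    (h : ∀ y ∈ A, |f y| ≤ c) : semiNormOn A f ≤ c :=
  Real.sSup_le (by rintro _ ⟨y, hy, rfl⟩; exact h y hy) hc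

theorem le_infDist_zero_of_le_apply {D : Set X} (hD : D.Nonempty) {f : StrongDual ℝ X}
    (hf : ‖f‖ ≤ 1) {c : ℝ} (h : ∀ w ∈ D, c ≤ f w) : c ≤ infDist 0 D :=
  (le_infDist hD).2 fun w hw => by
    have hfw := f.le_of_opNorm_le hf w
    rw [Real.norm_eq_abs] at hfw
    rw [dist_zero_left]
    linarith [h w hw, le_abs_self (f w)]

theorem infDist_zero_closedBall_le {z : X} {r : ℝ} (hr : 0 < r) (hrz : r ≤ ‖z‖) :
    infDist 0 (closedBall z r) ≤ ‖z‖ - r := by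
  have hz : 0 < ‖z‖ := hr.trans_le hrz
  have hp : (1 - r / ‖z‖) • z ∈ closedBall z r := by
    rw [mem_closedBall, dist_eq_norm, show (1 - r / ‖z‖) • z - z = -((r / ‖z‖) • z) by module,
      norm_neg, norm_smul, Real.norm_of_nonneg (by positivity), div_mul_cancel₀ _ hz.ne']
  calc infDist 0 (closedBall z r) ≤ ‖(1 - r / ‖z‖) • z‖ := by
        simpa using infDist_le_dist_of_mem (x := 0) hp
    _ = ‖z‖ - r := by
      rw [norm_smul, Real.norm_of_nonneg (sub_nonneg.2 ((div_le_one hz).2 hrz))]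
      field_simp

theorem lt_norm_sub_of_lt_infDist_zero_closedBall {z : X} {r η : ℝ} (hr : 0 < r) (hη : 0 ≤ η)
    (h : η < infDist 0 (closedBall z r)) : η < ‖z‖ - r := by
  by_cases hrz : r ≤ ‖z‖
  · exact h.trans_le (infDist_zero_closedBall_le hr hrz)
  · have h0 : (0 : X) ∈ closedBall z r := by
      rw [mem_closedBall, dist_zero_left]
      exact (not_le.1 hrz).le
    rw [infDist_zero_of_mem h0] at h
    linarith

def BallSeparation (𝒞 : Set (Set X)) (ε M η K : ℝ) : Prop :=
  ∀ C ∈ 𝒞, IsClosed C → Convex ℝ C → diam C ≤ M → ε ≤ infDist 0 C →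
    ∃ z₀ : X, ∃ r : ℝ, 0 < r ∧ r ≤ K ∧ C ⊆ closedBall z₀ r ∧ η < infDist 0 (closedBall z₀ r)

theorem exists_forall_wslice_lt_apply {D : Set X} {z₀ u : X} {r K η δ : ℝ} (hr : 0 < r)
    (hrK : r ≤ K) (hD : D ⊆ closedBall z₀ r) (hη : 0 ≤ η)
    (hdist : η < infDist 0 (closedBall z₀ r)) (hu : u ∈ D) (hu1 : ‖u‖ ≤ 1) (hδ : 0 ≤ δ) :
    ∃ x : X, ‖x‖ = 1 ∧ ∀ g ∈ wslice x δ, ∀ w ∈ D, η - δ * (1 + K) < g w := by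
  have hgap := lt_norm_sub_of_lt_infDist_zero_closedBall hr hη hdist
  have hz₀ : 0 < ‖z₀‖ := by linarith
  have hz₀K : ‖z₀‖ ≤ 1 + K := by
    have := norm_le_norm_add_norm_sub' z₀ u
    rw [← dist_eq_norm'] at this
    linarith [mem_closedBall.1 (hD hu)]
  refine ⟨‖z₀‖⁻¹ • z₀, norm_smul_inv_norm (norm_pos_iff.1 hz₀), ?_⟩
  rintro g ⟨hg1, hgx⟩ w hw
  have hgz₀ : ‖z₀‖ * (1 - δ) < g z₀ := by
    rwa [map_smul, smul_eq_mul, lt_inv_mul_iff₀ hz₀] at hgx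
  have hgw : g z₀ - r ≤ g w := by
    have := g.le_of_opNorm_le hg1 (z₀ - w)
    rw [map_sub, Real.norm_eq_abs, ← dist_eq_norm, dist_comm] at this
    linarith [le_abs_self (g z₀ - g w), mem_closedBall.1 (hD hw)]
  have := mul_le_mul_of_nonneg_left hz₀K hδ
  linarith

theorem exists_forall_wslice_neg_le_apply {𝒞 : Set (Set X)} (h𝒞 : IsCompatibleClass 𝒞)
    {σ K : ℝ} (hσ : 0 ≤ σ) (hσ3 : 3 * σ ≤ 1) (hball : BallSeparation 𝒞 (1 - 2 * σ) 2 (1 - 3 * σ) K)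
    {A : Set X} (hA𝒞 : A ∈ 𝒞) (hA : AbsConvex ℝ A) (hAc : IsClosed A)
    (hA1 : A ⊆ closedBall 0 1) {f : StrongDual ℝ X} (hf : ‖f‖ ≤ 1) {u : X} (hu : u ∈ A)
    (hfu : 1 - σ < f u) :
    ∃ x : X, ‖x‖ = 1 ∧ ∀ g ∈ wslice x (σ / (1 + K)),
      1 - 4 * σ < g u ∧ ∀ y ∈ A, -σ ≤ f y → -(4 * σ) ≤ g y := by
  set D := (fun y => u + y) '' (A ∩ {y | -σ ≤ f y})
  have hD𝒞 : D ∈ 𝒞 := by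
    refine h𝒞.subset_mem _ (h𝒞.smul_add_mem A hA𝒞 1 u) D ?_
    simp only [one_smul, add_comm _ u]
    exact image_mono inter_subset_left
  have hDc : IsClosed D :=
    (Homeomorph.addLeft u).isClosedMap _ (hAc.inter (isClosed_le continuous_const f.continuous))
  have hDconv : Convex ℝ D := (hA.2.inter (convex_halfSpace_ge f.isLinear _)).translate u
  have hDball : D ⊆ closedBall u 1 := by
    rintro _ ⟨y, ⟨hy, -⟩, rfl⟩
    simpa [dist_eq_norm] using hA1 hy
  have hDdiam : diam D ≤ 2 := by
    refine (diam_mono hDball isBounded_closedBall).trans ?_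
    linarith [diam_closedBall (x := u) zero_le_one]
  have huD : u ∈ D := ⟨0, ⟨hA.1.zero_mem ⟨u, hu⟩, by simpa using hσ⟩, add_zero u⟩
  have hDf : ∀ w ∈ D, 1 - 2 * σ ≤ f w := by
    rintro _ ⟨y, ⟨-, hy⟩, rfl⟩
    rw [map_add]
    linarith [hy.out]
  obtain ⟨z₀, r, hr, hrK, hDz, hdist⟩ :=
    hball D hD𝒞 hDc hDconv hDdiam (le_infDist_zero_of_le_apply ⟨u, huD⟩ hf hDf)
  have hu1 : ‖u‖ ≤ 1 := by simpa using hA1 hu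
  obtain ⟨x, hx, hxD⟩ := exists_forall_wslice_lt_apply (δ := σ / (1 + K)) hr hrK hDz
    (by linarith) hdist huD hu1 (div_nonneg hσ (by linarith))
  refine ⟨x, hx, fun g hg => ?_⟩
  have hgD : ∀ w ∈ D, 1 - 4 * σ < g w := fun w hw => by
    have := hxD g hg w hw
    rw [div_mul_cancel₀ _ (by linarith)] at this
    linarith
  have hgu : g u ≤ 1 := (le_abs_self _).trans (abs_apply_le_one hg.1 hu1)
  refine ⟨hgD u huD, fun y hy hfy => ?_⟩
  have hguy := hgD (u + y) ⟨y, ⟨hy, hfy⟩, rfl⟩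
  rw [map_add] at hguy
  linarith

theorem stmt17_general (𝒞 : Set (Set X)) (h𝒞 : IsCompatibleClass 𝒞)
    (h : ∀ ε : ℝ, 0 < ε → ∀ M : ℝ, 2 ≤ M → ∀ η : ℝ, 0 < η → η < ε →
      ∃ K : ℝ, 0 < K ∧ ∀ C ∈ 𝒞, IsClosed C → Convex ℝ C → Metric.diam C ≤ M →
        ε ≤ Metric.infDist 0 C →
        ∃ z₀ : X, ∃ r : ℝ, 0 < r ∧ r ≤ K ∧ C ⊆ closedBall z₀ r ∧
          η < Metric.infDist 0 (closedBall z₀ r)) :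
    ∀ ε : ℝ, 0 < ε → ∃ δ : ℝ, 0 < δ ∧ ∀ C ∈ 𝒞, C ⊆ closedBall (0 : X) 1 →
      ∀ f : StrongDual ℝ X, ‖f‖ = 1 →
        ∃ x : X, ‖x‖ = 1 ∧ wslice x δ ⊆ ballOn C f ε := by
  intro ε hε
  obtain ⟨σ, hσ, hσε, hσ1⟩ : ∃ σ : ℝ, 0 < σ ∧ 13 * σ ≤ ε ∧ 13 * σ ≤ 1 :=
    ⟨min ε 1 / 13, by positivity, by linarith [min_le_left ε 1], by linarith [min_le_right ε 1]⟩
  obtain ⟨K, hK, hball⟩ := h (1 - 2 * σ) (by linarith) 2 le_rfl (1 - 3 * σ) (by linarith)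
    (by linarith)
  refine ⟨σ / (1 + K), by positivity, fun C hC hC1 f hf => ?_⟩
  obtain ⟨u, hu1, hfu⟩ := exists_norm_le_one_lt_apply f (c := 1 - σ) (by linarith)
  set A := closure (absConvexHull ℝ (C ∪ {u}))
  have hA : AbsConvex ℝ A := absConvex_absConvexHull.closure
  have hA1 : A ⊆ closedBall 0 1 :=
    closure_minimal (absConvexHull_min (union_subset hC1 (by simpa using hu1))
      ⟨balanced_closedBall_zero, convex_closedBall 0 1⟩) isClosed_closedBall
  have hCuA : C ∪ {u} ⊆ A := subset_absConvexHull.trans subset_closure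
  obtain ⟨x, hx, hslice⟩ := exists_forall_wslice_neg_le_apply h𝒞 hσ.le (by linarith) hball
    (h𝒞.closedAbsConvexHull_mem _ (h𝒞.union_singleton_mem C hC u)) hA isClosed_closure hA1 hf.le
    (hCuA (mem_union_right _ rfl)) hfu
  refine ⟨x, hx, fun g hg => ?_⟩
  obtain ⟨hgu, hgA⟩ := hslice g hg
  have hfu' : |1 - f u| ≤ σ :=
    abs_le.2 ⟨by linarith [le_abs_self (f u), abs_apply_le_one hf.le hu1], by linarith⟩
  have hgu' : |1 - g u| ≤ 4 * σ :=
    abs_le.2 ⟨by linarith [le_abs_self (g u), abs_apply_le_one hg.1 hu1], by linarith⟩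
  refine (semiNormOn_le (c := 12 * σ) (by positivity) fun y hy => ?_).trans_lt (by linarith)
  have hfgy := hA.abs_sub_apply_le (hCuA (mem_union_right _ rfl)) (hCuA (mem_union_left _ hy))
    hfu' hgu' (abs_apply_le_one hf.le (by simpa using hC1 hy)) hgA
  show |f y - g y| ≤ 12 * σ
  linarith

theorem stmt17 [CompleteSpace X] (𝒞 : Set (Set X)) (h𝒞 : IsCompatibleClass 𝒞)
    (h : ∀ ε : ℝ, 0 < ε → ∀ M : ℝ, 2 ≤ M → ∀ η : ℝ, 0 < η → η < ε →
      ∃ K : ℝ, 0 < K ∧ ∀ C ∈ 𝒞, IsClosed C → Convex ℝ C → Metric.diam C ≤ M →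
        ε ≤ Metric.infDist 0 C →
        ∃ z₀ : X, ∃ r : ℝ, 0 < r ∧ r ≤ K ∧ C ⊆ closedBall z₀ r ∧
          η < Metric.infDist 0 (closedBall z₀ r)) :
    ∀ ε : ℝ, 0 < ε → ∃ δ : ℝ, 0 < δ ∧ ∀ C ∈ 𝒞, C ⊆ closedBall (0 : X) 1 →
      ∀ f : StrongDual ℝ X, ‖f‖ = 1 →
        ∃ x : X, ‖x‖ = 1 ∧ wslice x δ ⊆ ballOn C f ε :=
  stmt17_general 𝒞 h𝒞 h
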